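/- Let F(t), 0 ≤ t < t_G, be a deterministic càdlàg function, L a random variable, and define M_t = F(t)·1_{t<γ} + L·1_{t≥γ} for t ∈ ℝ₊. Then the following are equivalent: (i) M = (M_t)_{t ∈ ℝ₊} is a local martingale with respect to 𝔽; (ii) (M_t)_{t ∈ 𝒯} is a martingale with respect to (𝒻_t)_{t ∈ 𝒯}; (iii) E|M_t| < ∞ and E(M_t) = E(M_0) for every t ∈ 𝒯. -/

import Mathlib

open MeasureTheory Filter Set Topology
open scoped ENNReal NNReal Classical

noncomputable section

namespace SingleJump

variable {Ω : Type*}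

/-- The event `{γ > t}`. -/
def jumpSet (γ : Ω → ℝ≥0∞) (t : ℝ≥0) : Set Ω := {ω | (t : ℝ≥0∞) < γ ω}

/-- The collection `𝒻_t` of the single jump filtration generated by `γ` and the σ-field `m`:
`A ∈ 𝒻_t` iff `A` is `m`-measurable and `A ∩ {γ > t}` is either `∅` or `{γ > t}`. -/
def jumpColl (m : MeasurableSpace Ω) (γ : Ω → ℝ≥0∞) (t : ℝ≥0) : Set (Set Ω) :=
  {A | MeasurableSet[m] A ∧ (A ∩ jumpSet γ t = ∅ ∨ A ∩ jumpSet γ t = jumpSet γ t)}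

/-- `𝒻_t` as a σ-field (the collection `jumpColl` generates itself, see Proposition 1(i)). -/
def jumpσ (m : MeasurableSpace Ω) (γ : Ω → ℝ≥0∞) (t : ℝ≥0) : MeasurableSpace Ω :=
  MeasurableSpace.generateFrom (jumpColl m γ t)

/-- `𝒻_∞ = σ(⋃_{t ∈ ℝ₊} 𝒻_t)`. -/
def jumpσInf (m : MeasurableSpace Ω) (γ : Ω → ℝ≥0∞) : MeasurableSpace Ω :=
  ⨆ t : ℝ≥0, jumpσ m γ t

/-- A real function on `ℝ≥0` is càdlàg: right-continuous everywhere, finite left limits. -/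
def Cadlag (f : ℝ≥0 → ℝ) : Prop :=
  (∀ t, ContinuousWithinAt f (Ici t) t) ∧
    ∀ t : ℝ≥0, 0 < t → ∃ c : ℝ, Tendsto f (𝓝[<] t) (𝓝 c)

/-- The filter of times `t ∈ ℝ≥0` with `t ↑ a` strictly from the left (this is `atTop`
when `a = ∞`). -/
def leftF (a : ℝ≥0∞) : Filter ℝ≥0 := Filter.comap (fun t : ℝ≥0 => (t : ℝ≥0∞)) (𝓝[<] a)

/-- Total variation of `f` over `[0,∞)`, including `|f 0|` (the paper's convention `Var`). -/
def totalVar (f : ℝ≥0 → ℝ) : ℝ≥0∞ := (‖f 0‖₊ : ℝ≥0∞) + eVariationOn f Set.univ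

/-- The process `M` stopped at the (possibly infinite) random time `T`. -/
def stopped (M : ℝ≥0 → Ω → ℝ) (T : Ω → ℝ≥0∞) : ℝ≥0 → Ω → ℝ :=
  fun t ω => M (((t : ℝ≥0∞) ⊓ T ω).toNNReal) ω

section WithMeasurableSpace

variable [m : MeasurableSpace Ω]

/-- `Ḡ(t) = 1 - G(t) = P(γ > t)`. -/
def Gbar (μ : Measure Ω) (γ : Ω → ℝ≥0∞) (t : ℝ≥0) : ℝ :=
  (μ {ω | (t : ℝ≥0∞) < γ ω}).toReal

/-- `Ḡ(t-) = P(γ ≥ t)`, the left-hand limit of `Ḡ` at `t`. -/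
def GbarLeft (μ : Measure Ω) (γ : Ω → ℝ≥0∞) (t : ℝ≥0) : ℝ :=
  (μ {ω | (t : ℝ≥0∞) ≤ γ ω}).toReal

/-- `t_G = sup {t ∈ ℝ₊ : G(t) < 1}`, the right endpoint of the law of `γ`. -/
def tG (μ : Measure Ω) (γ : Ω → ℝ≥0∞) : ℝ≥0∞ :=
  sSup ((fun t : ℝ≥0 => (t : ℝ≥0∞)) '' {t : ℝ≥0 | μ {ω | γ ω ≤ (t : ℝ≥0∞)} < 1})

/-- `𝒯 = {t ∈ ℝ₊ : P(γ ≥ t) > 0}`. -/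
def TT (μ : Measure Ω) (γ : Ω → ℝ≥0∞) : Set ℝ≥0 :=
  {t | 0 < μ {ω | (t : ℝ≥0∞) ≤ γ ω}}

/-- Case A: `P(γ = t_G < ∞) = 0`. -/
def CaseA (μ : Measure Ω) (γ : Ω → ℝ≥0∞) : Prop :=
  μ {ω | γ ω = tG μ γ ∧ tG μ γ < ⊤} = 0

/-- Case B: `P(γ = t_G < ∞) > 0`. -/
def CaseB (μ : Measure Ω) (γ : Ω → ℝ≥0∞) : Prop :=
  0 < μ {ω | γ ω = tG μ γ ∧ tG μ γ < ⊤}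

/-- `z ∈ L¹_loc(dG)` : `z` is Borel and `∫_{[0,t]} |z(s)| dG(s) < ∞` for every `t ∈ 𝒯`,
where `dG` is the law of `γ` (a measure on `[0,∞]`). -/
def MemL1loc (μ : Measure Ω) (γ : Ω → ℝ≥0∞) (z : ℝ≥0 → ℝ) : Prop :=
  Measurable z ∧ ∀ t ∈ TT μ γ,
    IntegrableOn (fun x : ℝ≥0∞ => z x.toNNReal) (Icc 0 (t : ℝ≥0∞)) (μ.map γ)

/-- `F loc≪ G` with density `z = dF/dG` : `F(t) = F(0) + ∫_(0,t] z(s) dG(s)` for `t < t_G`. -/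
def LocAC (μ : Measure Ω) (γ : Ω → ℝ≥0∞) (F z : ℝ≥0 → ℝ) : Prop :=
  MemL1loc μ γ z ∧ ∀ t : ℝ≥0, (t : ℝ≥0∞) < tG μ γ →
    F t = F 0 + ∫ x in Ioc (0 : ℝ≥0∞) (t : ℝ≥0∞), z x.toNNReal ∂(μ.map γ)

/-- Condition M for the pair `(F, H)`. -/
def CondM (μ : Measure Ω) (γ : Ω → ℝ≥0∞) (F H : ℝ≥0 → ℝ) : Prop :=
  (∃ z, LocAC μ γ F z) ∧ MemL1loc μ γ H ∧
  (∀ t : ℝ≥0, (t : ℝ≥0∞) < tG μ γ →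
    F t * Gbar μ γ t + ∫ x in Ioc (0 : ℝ≥0∞) (t : ℝ≥0∞), H x.toNNReal ∂(μ.map γ)
      = F 0 * Gbar μ γ 0) ∧
  (CaseB μ γ → Tendsto F (leftF (tG μ γ)) (𝓝 (H (tG μ γ).toNNReal)))

/-- A stopping time of the single jump filtration: `{T ≤ t} ∈ 𝒻_t` for all `t ∈ ℝ₊`. -/
def IsSJStoppingTime (γ : Ω → ℝ≥0∞) (T : Ω → ℝ≥0∞) : Prop :=
  ∀ t : ℝ≥0, {ω | T ω ≤ (t : ℝ≥0∞)} ∈ jumpColl m γ t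

/-- The martingale property on a set `S` of times, w.r.t. the single jump filtration. -/
def MartingaleOn (μ : Measure Ω) (γ : Ω → ℝ≥0∞) (M : ℝ≥0 → Ω → ℝ) (S : Set ℝ≥0) : Prop :=
  (∀ t ∈ S, Measurable[jumpσ m γ t] (M t)) ∧ (∀ t ∈ S, Integrable (M t) μ) ∧
    ∀ s ∈ S, ∀ t ∈ S, s ≤ t → μ[M t|jumpσ m γ s] =ᵐ[μ] M s

/-- A uniformly integrable martingale w.r.t. the single jump filtration. -/
def UIMartingale (μ : Measure Ω) (γ : Ω → ℝ≥0∞) (M : ℝ≥0 → Ω → ℝ) : Prop :=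
  MartingaleOn μ γ M Set.univ ∧ UniformIntegrable M 1 μ

/-- A local martingale w.r.t. the single jump filtration: adapted, a.s. càdlàg paths, and
there are stopping times `T n ↑ ∞` a.s. with each stopped process a UI martingale. -/
def LocalMartingale (μ : Measure Ω) (γ : Ω → ℝ≥0∞) (M : ℝ≥0 → Ω → ℝ) : Prop :=
  (∀ t : ℝ≥0, Measurable[jumpσ m γ t] (M t)) ∧
  (∀ᵐ ω ∂μ, Cadlag fun t => M t ω) ∧
  ∃ T : ℕ → Ω → ℝ≥0∞,
    (∀ n, IsSJStoppingTime γ (T n)) ∧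
    (∀ᵐ ω ∂μ, Monotone (fun n => T n ω) ∧ Tendsto (fun n => T n ω) atTop (𝓝 (⊤ : ℝ≥0∞))) ∧
    ∀ n, UIMartingale μ γ (stopped M (T n))

/-- `E[L' | γ] = 0` for a (possibly only locally integrable) random variable `L'`. -/
def CondZeroGivenGamma (μ : Measure Ω) (γ : Ω → ℝ≥0∞) (L' : Ω → ℝ) : Prop :=
  ∀ B : Set ℝ≥0∞, MeasurableSet B → IntegrableOn L' (γ ⁻¹' B) μ →
    ∫ ω in γ ⁻¹' B, L' ω ∂μ = 0

end WithMeasurableSpace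

/-!
An `𝒻_t`-measurable set meets `{γ > t}` either in `∅` or in all of `{γ > t}`, and `M` does not
move after `γ`. Hence for `s ≤ t` and `A ∈ 𝒻_s`, `E[M_t - M_s; A]` is either `0` or
`E[M_t - M_s]`: constant means on `𝒯` are the same as the martingale property on `𝒯`.
A localizing sequence `T_n ↑ ∞` eventually exceeds `t` on some path with `γ ≥ t`; by the same
dichotomy `T_n` then never stops before `t` on a path still alive, so `M_t = M_{t ∧ T_n}` is
integrable with mean `E M_0`. Conversely, the stopping time equal to `c` on `{γ > c}` and `∞` on
`{γ ≤ c}` stops `M` at `M_{· ∧ c}`, a uniformly integrable martingale closed by `M_c`; letting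
`c ↑ t_G` (or `c = t_G` in Case B) localizes `M`. Its paths are càdlàg since `F` is
right-continuous and `F(s) = (E M_0 - E[L; γ ≤ s]) / P(γ > s)` has left limits wherever
`P(γ ≥ ·) > 0`.
-/

section Paths

variable {γ : Ω → ℝ≥0∞} {F : ℝ≥0 → ℝ} {L : Ω → ℝ}

lemma jumpSet_anti {s t : ℝ≥0} (hst : s ≤ t) : jumpSet γ t ⊆ jumpSet γ s :=
  fun _ hω => (ENNReal.coe_le_coe.2 hst).trans_lt hω

def jumpProcess (γ : Ω → ℝ≥0∞) (F : ℝ≥0 → ℝ) (L : Ω → ℝ) : ℝ≥0 → Ω → ℝ :=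
  fun t ω => if (t : ℝ≥0∞) < γ ω then F t else L ω

lemma jumpProcess_of_lt {t : ℝ≥0} {ω : Ω} (h : (t : ℝ≥0∞) < γ ω) :
    jumpProcess γ F L t ω = F t :=
  if_pos h

lemma jumpProcess_of_le {t : ℝ≥0} {ω : Ω} (h : γ ω ≤ t) : jumpProcess γ F L t ω = L ω :=
  if_neg h.not_gt

def ConstantAfter (γ : Ω → ℝ≥0∞) (M : ℝ≥0 → Ω → ℝ) : Prop :=
  ∀ ω (s t : ℝ≥0), γ ω ≤ s → s ≤ t → M t ω = M s ω

lemma constantAfter_jumpProcess : ConstantAfter γ (jumpProcess γ F L) := fun _ _ _ hs hst => by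
  rw [jumpProcess_of_le hs, jumpProcess_of_le (hs.trans (ENNReal.coe_le_coe.2 hst))]

lemma stopped_zero (M : ℝ≥0 → Ω → ℝ) (T : Ω → ℝ≥0∞) : stopped M T 0 = M 0 := by
  funext ω
  simp [stopped]

def cutoffTime (γ : Ω → ℝ≥0∞) (c : ℝ≥0) : Ω → ℝ≥0∞ :=
  fun ω => if γ ω ≤ c then ⊤ else c

lemma coe_le_cutoffTime (c : ℝ≥0) (ω : Ω) : (c : ℝ≥0∞) ≤ cutoffTime γ c ω := by
  unfold cutoffTime
  split_ifs <;> simp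

lemma cutoffTime_of_le {c : ℝ≥0} {ω : Ω} (h : γ ω ≤ c) : cutoffTime γ c ω = ⊤ :=
  if_pos h

lemma monotone_cutoffTime {ts : ℕ → ℝ≥0} (hts : Monotone ts) (ω : Ω) :
    Monotone fun n => cutoffTime γ (ts n) ω := by
  intro i j hij
  by_cases hj : γ ω ≤ ts j
  · simp [cutoffTime_of_le hj]
  · have hi : ¬γ ω ≤ ts i := fun hi => hj (hi.trans (ENNReal.coe_le_coe.2 (hts hij)))
    simpa [cutoffTime, hi, hj] using hts hij

lemma tendsto_cutoffTime_top {ts : ℕ → ℝ≥0} {a : ℝ≥0∞}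
    (hts : Tendsto (fun n => (ts n : ℝ≥0∞)) atTop (𝓝 a)) {ω : Ω} (hω : γ ω < a ∨ a = ⊤) :
    Tendsto (fun n => cutoffTime γ (ts n) ω) atTop (𝓝 ⊤) := by
  rcases hω with hlt | rfl
  · refine tendsto_const_nhds.congr' ?_
    filter_upwards [hts.eventually (eventually_gt_nhds hlt)] with n hn
    exact (cutoffTime_of_le hn.le).symm
  · exact tendsto_nhds_top_mono hts (Eventually.of_forall fun n => coe_le_cutoffTime _ ω)

lemma ConstantAfter.stopped_cutoffTime {M : ℝ≥0 → Ω → ℝ} (hM : ConstantAfter γ M) (c : ℝ≥0) :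
    stopped M (cutoffTime γ c) = fun u => M (u ⊓ c) := by
  funext u ω
  by_cases h : γ ω ≤ c
  · rw [stopped, cutoffTime_of_le h, inf_top_eq, ENNReal.toNNReal_coe]
    rcases le_total u c with huc | hcu
    · rw [inf_eq_left.2 huc]
    · rw [inf_eq_right.2 hcu, hM ω c u h hcu]
  · simp [stopped, cutoffTime, h, ← ENNReal.coe_min]

lemma cadlag_jumpProcess {ω : Ω}
    (hrc : ∀ t : ℝ≥0, (t : ℝ≥0∞) < γ ω → ContinuousWithinAt F (Ici t) t)
    (hll : ∀ t : ℝ≥0, 0 < t → (t : ℝ≥0∞) ≤ γ ω → ∃ c, Tendsto F (𝓝[<] t) (𝓝 c)) :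
    Cadlag fun t => jumpProcess γ F L t ω := by
  constructor
  · intro t
    by_cases ht : (t : ℝ≥0∞) < γ ω
    · have hF : (fun s => jumpProcess γ F L s ω) =ᶠ[𝓝 t] F := by
        filter_upwards [(isOpen_lt ENNReal.continuous_coe continuous_const).mem_nhds ht]
          with s hs using jumpProcess_of_lt hs
      exact (hrc t ht).congr_of_eventuallyEq (nhdsWithin_le_nhds hF) (hF.eq_of_nhds)
    · refine continuousWithinAt_const.congr (fun s hs => ?_) (jumpProcess_of_le (not_lt.1 ht))
      exact jumpProcess_of_le ((not_lt.1 ht).trans (ENNReal.coe_le_coe.2 hs))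
  · intro t ht
    by_cases hle : (t : ℝ≥0∞) ≤ γ ω
    · obtain ⟨c, hc⟩ := hll t ht hle
      refine ⟨c, hc.congr' ?_⟩
      filter_upwards [self_mem_nhdsWithin] with s (hs : s < t)
      exact (jumpProcess_of_lt ((ENNReal.coe_lt_coe.2 hs).trans_le hle)).symm
    · refine ⟨L ω, tendsto_const_nhds.congr' ?_⟩
      have hopen : IsOpen {s : ℝ≥0 | γ ω < s} := isOpen_lt continuous_const ENNReal.continuous_coe
      filter_upwards [nhdsWithin_le_nhds (hopen.mem_nhds (not_le.1 hle))] with s hs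
      exact (jumpProcess_of_le (le_of_lt hs)).symm

end Paths

section WithMeasurableSpace

variable [m : MeasurableSpace Ω] {γ : Ω → ℝ≥0∞} {μ : Measure Ω} {s t : ℝ≥0}
  {F : ℝ≥0 → ℝ} {L : Ω → ℝ}

lemma mem_jumpColl_iff {A : Set Ω} :
    A ∈ jumpColl m γ t ↔ MeasurableSet A ∧ (Disjoint A (jumpSet γ t) ∨ jumpSet γ t ⊆ A) := by
  rw [Set.disjoint_iff_inter_eq_empty, ← Set.inter_eq_right]
  rfl

lemma measurableSet_jumpσ_iff {A : Set Ω} :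
    MeasurableSet[jumpσ m γ t] A ↔ A ∈ jumpColl m γ t := by
  refine ⟨fun h => ?_, MeasurableSpace.measurableSet_generateFrom⟩
  induction h with
  | basic A hA => exact hA
  | empty => exact mem_jumpColl_iff.2 ⟨MeasurableSet.empty, Or.inl (Set.empty_disjoint _)⟩
  | compl A _ ih =>
    obtain ⟨hA, hA'⟩ := mem_jumpColl_iff.1 ih
    exact mem_jumpColl_iff.2 ⟨hA.compl, hA'.symm.imp Set.disjoint_compl_left_iff_subset.2
      Set.subset_compl_iff_disjoint_left.2⟩
  | iUnion A _ ih =>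
    refine mem_jumpColl_iff.2 ⟨MeasurableSet.iUnion fun n => (mem_jumpColl_iff.1 (ih n)).1, ?_⟩
    by_cases h : ∃ n, jumpSet γ t ⊆ A n
    · obtain ⟨n, hn⟩ := h
      exact Or.inr (hn.trans (Set.subset_iUnion A n))
    · rw [not_exists] at h
      exact Or.inl (Set.disjoint_iUnion_left.2 fun n =>
        ((mem_jumpColl_iff.1 (ih n)).2.resolve_right (h n)))

lemma jumpσ_le : jumpσ m γ t ≤ m :=
  MeasurableSpace.generateFrom_le fun _ hA => hA.1

lemma jumpσ_mono (hst : s ≤ t) : jumpσ m γ s ≤ jumpσ m γ t := by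
  refine MeasurableSpace.generateFrom_mono fun A hA => ?_
  obtain ⟨hAm, hA⟩ := mem_jumpColl_iff.1 hA
  exact mem_jumpColl_iff.2 ⟨hAm, hA.imp (·.mono_right (jumpSet_anti hst))
    (jumpSet_anti hst).trans⟩

lemma measurableSet_jumpSet (hγ : Measurable γ) : MeasurableSet (jumpSet γ t) :=
  measurableSet_lt measurable_const hγ

lemma measurable_jumpσ_of_eqOn {g : Ω → ℝ} (hg : Measurable g) {c : ℝ}
    (hc : Set.EqOn g (fun _ => c) (jumpSet γ t)) : Measurable[jumpσ m γ t] g := by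
  intro B hB
  refine measurableSet_jumpσ_iff.2 (mem_jumpColl_iff.2 ⟨hg hB, ?_⟩)
  by_cases hcB : c ∈ B
  · exact Or.inr fun ω hω => by simpa [Set.mem_preimage, hc hω] using hcB
  · exact Or.inl (Set.disjoint_left.2 fun ω hωB hω => hcB (by simpa [hc hω] using hωB))

lemma adapted_jumpProcess (hγ : Measurable γ) (hL : Measurable L) (t : ℝ≥0) :
    Measurable[jumpσ m γ t] (jumpProcess γ F L t) :=
  measurable_jumpσ_of_eqOn ((measurable_const.ite (measurableSet_jumpSet hγ) hL))
    fun _ hω => jumpProcess_of_lt hω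

lemma isSJStoppingTime_cutoffTime (hγ : Measurable γ) (c : ℝ≥0) :
    IsSJStoppingTime γ (cutoffTime γ c) := by
  intro u
  by_cases hcu : c ≤ u
  · have hset : {ω | cutoffTime γ c ω ≤ u} = jumpSet γ c := by
      ext ω
      by_cases h : γ ω ≤ c
      · simp [cutoffTime, h, jumpSet]
      · simp [cutoffTime, h, jumpSet, not_le.1 h, hcu]
    rw [hset]
    exact mem_jumpColl_iff.2 ⟨measurableSet_jumpSet hγ, Or.inr (jumpSet_anti hcu)⟩
  · have hset : {ω | cutoffTime γ c ω ≤ u} = ∅ := by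
      ext ω
      by_cases h : γ ω ≤ c <;> simp [cutoffTime, h, hcu]
    rw [hset]
    exact mem_jumpColl_iff.2 ⟨MeasurableSet.empty, Or.inl (Set.empty_disjoint _)⟩

/-- `{T ≤ s}` either contains `{γ > s}` or misses it. -/
lemma IsSJStoppingTime.jump_le_of_le {T : Ω → ℝ≥0∞} (hT : IsSJStoppingTime γ T) {ω₀ ω : Ω}
    (hγ₀ : (s : ℝ≥0∞) < γ ω₀) (hT₀ : (s : ℝ≥0∞) < T ω₀) (hω : T ω ≤ s) : γ ω ≤ s := by
  rcases (mem_jumpColl_iff.1 (hT s)).2 with hdisj | hsub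
  · exact not_lt.1 fun h => Set.disjoint_left.1 hdisj hω h
  · exact absurd (hsub hγ₀) (not_le.2 hT₀)

lemma ConstantAfter.stopped_eq {M : ℝ≥0 → Ω → ℝ} (hM : ConstantAfter γ M) {T : Ω → ℝ≥0∞}
    (hT : IsSJStoppingTime γ T) {ω₀ : Ω} (hγ₀ : (t : ℝ≥0∞) ≤ γ ω₀) (hT₀ : (t : ℝ≥0∞) ≤ T ω₀) :
    stopped M T t = M t := by
  funext ω
  rcases le_or_gt (t : ℝ≥0∞) (T ω) with h | h
  · simp [stopped, inf_eq_left.2 h]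
  · lift T ω to ℝ≥0 using h.ne_top with r hr
    have hrt : r < t := ENNReal.coe_lt_coe.1 h
    have hγr := hT.jump_le_of_le ((ENNReal.coe_lt_coe.2 hrt).trans_le hγ₀)
      ((ENNReal.coe_lt_coe.2 hrt).trans_le hT₀) hr.ge
    simp only [stopped, ← hr, inf_eq_right.2 h.le, ENNReal.toNNReal_coe]
    exact (hM ω r t hγr hrt.le).symm

lemma setIntegral_eq_zero_of_mem_jumpColl (hγ : Measurable γ) {Z : Ω → ℝ}
    (hZ : Integrable Z μ) (hZ0 : ∀ ω, γ ω ≤ s → Z ω = 0) (hmean : ∫ ω, Z ω ∂μ = 0)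
    {A : Set Ω} (hA : A ∈ jumpColl m γ s) : ∫ ω in A, Z ω ∂μ = 0 := by
  have hS : MeasurableSet (jumpSet γ s) := measurableSet_jumpSet hγ
  have hoff : ∀ B : Set Ω, B ⊆ (jumpSet γ s)ᶜ → ∫ ω in B, Z ω ∂μ = 0 := fun B hB =>
    setIntegral_eq_zero_of_forall_eq_zero fun ω hω => hZ0 ω (not_lt.1 (hB hω))
  rw [← integral_inter_add_sdiff hS hZ.integrableOn, hoff (A \ jumpSet γ s) fun ω hω => hω.2,
    add_zero]
  rcases (mem_jumpColl_iff.1 hA).2 with hdisj | hsub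
  · rw [hdisj.inter_eq, Measure.restrict_empty, integral_zero_measure]
  · rw [Set.inter_eq_right.2 hsub, ← hmean, ← integral_add_compl hS hZ, hoff _ subset_rfl,
      add_zero]

lemma condExp_jumpσ_ae_eq [IsFiniteMeasure μ] (hγ : Measurable γ) {X Y : Ω → ℝ}
    (hX : Integrable X μ) (hY : Integrable Y μ) (hYm : Measurable[jumpσ m γ s] Y)
    (hXY : ∀ ω, γ ω ≤ s → X ω = Y ω) (hmean : ∫ ω, X ω ∂μ = ∫ ω, Y ω ∂μ) :
    μ[X|jumpσ m γ s] =ᵐ[μ] Y := by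
  refine (ae_eq_condExp_of_forall_setIntegral_eq jumpσ_le hX (fun _ _ _ => hY.integrableOn)
    (fun A hA _ => ?_) hYm.stronglyMeasurable.aestronglyMeasurable).symm
  have h := setIntegral_eq_zero_of_mem_jumpColl (Z := fun ω => X ω - Y ω) hγ (hX.sub hY)
    (fun ω hω => sub_eq_zero.2 (hXY ω hω)) (by rw [integral_sub hX hY, hmean, sub_self])
    (measurableSet_jumpσ_iff.1 hA)
  rw [integral_sub hX.integrableOn hY.integrableOn, sub_eq_zero] at h
  exact h.symm

lemma ConstantAfter.martingaleOn [IsFiniteMeasure μ] (hγ : Measurable γ) {M : ℝ≥0 → Ω → ℝ}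
    (hM : ConstantAfter γ M) {S : Set ℝ≥0} (hadapt : ∀ t ∈ S, Measurable[jumpσ m γ t] (M t))
    (hint : ∀ t ∈ S, Integrable (M t) μ)
    (hmean : ∀ t ∈ S, ∫ ω, M t ω ∂μ = ∫ ω, M 0 ω ∂μ) : MartingaleOn μ γ M S :=
  ⟨hadapt, hint, fun s hs t ht hst => condExp_jumpσ_ae_eq hγ (hint t ht) (hint s hs)
    (hadapt s hs) (fun ω hω => hM ω s t hω hst) (by rw [hmean t ht, hmean s hs])⟩

lemma MartingaleOn.integrable_and_integral_eq [IsFiniteMeasure μ] {M : ℝ≥0 → Ω → ℝ}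
    {S : Set ℝ≥0} (h : MartingaleOn μ γ M S) (h0 : 0 ∈ S) :
    (∀ t ∈ S, Integrable (M t) μ) ∧ ∀ t ∈ S, ∫ ω, M t ω ∂μ = ∫ ω, M 0 ω ∂μ :=
  ⟨h.2.1, fun t ht => (integral_condExp jumpσ_le).symm.trans
    (integral_congr_ae (h.2.2 0 h0 t ht zero_le))⟩

lemma MartingaleOn.uiMartingale_inf [IsFiniteMeasure μ] {M : ℝ≥0 → Ω → ℝ} {S : Set ℝ≥0}
    (h : MartingaleOn μ γ M S) {c : ℝ≥0} (hS : ∀ u ≤ c, u ∈ S) :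
    UIMartingale μ γ fun u => M (u ⊓ c) := by
  have hmem : ∀ u, u ⊓ c ∈ S := fun u => hS _ inf_le_right
  have hc : c ∈ S := hS c le_rfl
  refine ⟨⟨fun u _ => (h.1 _ (hmem u)).mono (jumpσ_mono inf_le_left) le_rfl,
    fun u _ => h.2.1 _ (hmem u), fun a _ b _ hab => ?_⟩, ?_⟩
  · dsimp only
    rcases le_total a c with hac | hca
    · rw [inf_eq_left.2 hac]
      exact h.2.2 a (hS a hac) (b ⊓ c) (hmem b) (le_inf hab hac)
    · rw [inf_eq_right.2 hca, inf_eq_right.2 (hca.trans hab)]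
      exact (condExp_of_stronglyMeasurable jumpσ_le
        ((h.1 c hc).mono (jumpσ_mono hca) le_rfl).stronglyMeasurable (h.2.1 c hc)).eventuallyEq
  · exact ((h.2.1 c hc).uniformIntegrable_condExp fun u => jumpσ_le (t := u ⊓ c)).ae_eq
      fun u => h.2.2 _ (hmem u) c hc inf_le_right

lemma LocalMartingale.integrable_and_integral_eq [IsFiniteMeasure μ] {M : ℝ≥0 → Ω → ℝ}
    (h : LocalMartingale μ γ M) (hM : ConstantAfter γ M) :
    (∀ t ∈ TT μ γ, Integrable (M t) μ) ∧ ∀ t ∈ TT μ γ, ∫ ω, M t ω ∂μ = ∫ ω, M 0 ω ∂μ := by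
  obtain ⟨-, -, T, hT, hlim, hUI⟩ := h
  have hstop : ∀ t ∈ TT μ γ, ∃ n, stopped M (T n) t = M t := fun t ht => by
    obtain ⟨ω₀, hγ₀, -, hT₀⟩ := Measure.exists_mem_of_measure_ne_zero_of_ae ht.ne'
      (ae_restrict_of_ae hlim)
    obtain ⟨n, hn⟩ := (hT₀.eventually (eventually_ge_nhds ENNReal.coe_lt_top)).exists
    exact ⟨n, hM.stopped_eq (hT n) hγ₀ hn⟩
  have hUI' := fun n => (hUI n).1.integrable_and_integral_eq trivial
  refine ⟨fun t ht => ?_, fun t ht => ?_⟩ <;> obtain ⟨n, hn⟩ := hstop t ht <;> rw [← hn]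
  · exact (hUI' n).1 t trivial
  · rw [(hUI' n).2 t trivial, stopped_zero]

lemma mem_TT_of_le (ht : t ∈ TT μ γ) (hst : s ≤ t) : s ∈ TT μ γ :=
  ht.trans_le (measure_mono fun _ hω => (ENNReal.coe_le_coe.2 hst).trans hω)

lemma zero_mem_TT [NeZero μ] : (0 : ℝ≥0) ∈ TT μ γ := by
  simp [TT, NeZero.ne μ]

lemma mem_TT_of_lt_tG [IsProbabilityMeasure μ] (h : (t : ℝ≥0∞) < tG μ γ) : t ∈ TT μ γ := by
  obtain ⟨_, ⟨s, hs, rfl⟩, hts⟩ := lt_sSup_iff.1 h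
  have hcover : (Set.univ : Set Ω) ⊆ {ω | γ ω ≤ s} ∪ {ω | (t : ℝ≥0∞) ≤ γ ω} := fun ω _ =>
    (le_or_gt (t : ℝ≥0∞) (γ ω)).symm.imp (fun h => (h.trans hts).le) id
  refine (pos_iff_ne_zero (α := ℝ≥0∞)).2 fun h0 => (lt_irrefl (1 : ℝ≥0∞)) ?_
  calc (1 : ℝ≥0∞) = μ Set.univ := measure_univ.symm
    _ ≤ μ {ω | γ ω ≤ s} + μ {ω | (t : ℝ≥0∞) ≤ γ ω} := (measure_mono hcover).trans
      (measure_union_le _ _)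
    _ < 1 := by rwa [h0, add_zero]

lemma measure_lt_eq_zero_of_tG_lt [IsProbabilityMeasure μ] (hγ : Measurable γ)
    (h : tG μ γ < t) : μ {ω | (t : ℝ≥0∞) < γ ω} = 0 := by
  have h1 : μ {ω | γ ω ≤ t} = 1 :=
    le_antisymm prob_le_one (not_lt.1 fun hlt => h.not_ge (le_sSup ⟨t, hlt, rfl⟩))
  have hcompl : {ω | (t : ℝ≥0∞) < γ ω} = {ω | γ ω ≤ t}ᶜ := by
    ext
    simp
  rw [hcompl, prob_compl_eq_zero_iff (measurableSet_le hγ measurable_const)]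
  exact h1

lemma ae_le_tG [IsProbabilityMeasure μ] (hγ : Measurable γ) : ∀ᵐ ω ∂μ, γ ω ≤ tG μ γ := by
  have h : ∀ᵐ ω ∂μ, ∀ q : ℚ, tG μ γ < ((q : ℝ).toNNReal : ℝ≥0∞) → γ ω ≤ (q : ℝ).toNNReal := by
    rw [ae_all_iff]
    intro q
    by_cases hq : tG μ γ < ((q : ℝ).toNNReal : ℝ≥0∞)
    · filter_upwards [measure_eq_zero_iff_ae_notMem.1 (measure_lt_eq_zero_of_tG_lt hγ hq)]
        with ω hω _ using not_lt.1 hω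
    · exact Eventually.of_forall fun _ h => absurd h hq
  filter_upwards [h] with ω hω
  by_contra! hlt
  obtain ⟨q, -, h1, h2⟩ := ENNReal.lt_iff_exists_rat_btwn.1 hlt
  exact (hω q h1).not_gt h2

lemma ae_forall_le_mem_TT [IsProbabilityMeasure μ] (hγ : Measurable γ) :
    ∀ᵐ ω ∂μ, ∀ t : ℝ≥0, (t : ℝ≥0∞) ≤ γ ω → t ∈ TT μ γ := by
  by_cases h0 : μ {ω | γ ω = tG μ γ} = 0
  · filter_upwards [ae_le_tG hγ, measure_eq_zero_iff_ae_notMem.1 h0] with ω h1 h2 t ht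
    exact mem_TT_of_lt_tG ((ht.trans h1).lt_of_ne fun h => h2 (le_antisymm h1 (h ▸ ht)))
  · filter_upwards [ae_le_tG hγ] with ω h1 t ht
    rcases (ht.trans h1).lt_or_eq with hlt | heq
    · exact mem_TT_of_lt_tG hlt
    · exact (pos_iff_ne_zero.2 h0).trans_le (measure_mono fun ω' hω' => heq.trans hω'.symm |>.le)

lemma integral_jumpProcess (hγ : Measurable γ) (hint : Integrable (jumpProcess γ F L s) μ) :
    ∫ ω, jumpProcess γ F L s ω ∂μ
      = F s * μ.real {ω | (s : ℝ≥0∞) < γ ω} + ∫ ω in {ω | γ ω ≤ s}, L ω ∂μ := by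
  have hS : MeasurableSet {ω | (s : ℝ≥0∞) < γ ω} := measurableSet_jumpSet hγ
  have hcompl : {ω | (s : ℝ≥0∞) < γ ω}ᶜ = {ω | γ ω ≤ s} := by
    ext
    simp
  rw [← integral_add_compl hS hint, setIntegral_congr_fun hS fun ω hω => jumpProcess_of_lt hω,
    setIntegral_const, smul_eq_mul, mul_comm, hcompl,
    setIntegral_congr_fun (measurableSet_le hγ measurable_const) fun ω hω => jumpProcess_of_le hω]

lemma tendsto_setIntegral_le_nhdsLT (hγ : Measurable γ) {f : Ω → ℝ} {b : ℝ≥0}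
    (hf : IntegrableOn f {ω | γ ω < b} μ) :
    Tendsto (fun s : ℝ≥0 => ∫ ω in {ω | γ ω ≤ s}, f ω ∂μ) (𝓝[<] b)
      (𝓝 (∫ ω in {ω | γ ω < b}, f ω ∂μ)) := by
  have hle : ∀ s : ℝ≥0, MeasurableSet {ω | γ ω ≤ s} := fun s => measurableSet_le hγ measurable_const
  have hind : ∀ s < b, ∫ ω in {ω | γ ω < b}, {ω | γ ω ≤ s}.indicator f ω ∂μ
      = ∫ ω in {ω | γ ω ≤ s}, f ω ∂μ := fun s hs => by
    have hsub : {ω | γ ω ≤ s} ⊆ {ω | γ ω < b} := fun ω (hω : γ ω ≤ s) =>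
      hω.trans_lt (ENNReal.coe_lt_coe.2 hs)
    rw [setIntegral_indicator (hle s), Set.inter_eq_self_of_subset_right hsub]
  refine Tendsto.congr' (eventually_nhdsWithin_of_forall hind) ?_
  refine tendsto_integral_filter_of_dominated_convergence (fun ω => ‖f ω‖)
    (Eventually.of_forall fun s => hf.1.indicator (hle s))
    (Eventually.of_forall fun s => Eventually.of_forall fun ω => norm_indicator_le_norm_self _ _)
    hf.norm ?_
  filter_upwards [ae_restrict_mem (measurableSet_lt hγ measurable_const)] with ω (hω : γ ω < b)
  refine tendsto_const_nhds.congr' ?_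
  have hopen : IsOpen {s : ℝ≥0 | γ ω < s} := isOpen_lt continuous_const ENNReal.continuous_coe
  filter_upwards [nhdsWithin_le_nhds (hopen.mem_nhds hω)] with s (hs : γ ω < s)
  exact (Set.indicator_of_mem (show ω ∈ {ω | γ ω ≤ s} from hs.le) f).symm

/-- On `[0, b)`, `F s = (C - E[L; γ ≤ s]) / P(γ > s)` with `P(γ > s) ≥ P(γ ≥ b) > 0`. -/
lemma exists_tendsto_nhdsLT_of_integral_eq [IsProbabilityMeasure μ] (hγ : Measurable γ)
    {b : ℝ≥0} (hb : b ∈ TT μ γ) (hint : ∀ s ≤ b, Integrable (jumpProcess γ F L s) μ) {C : ℝ}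
    (hmean : ∀ s < b, ∫ ω, jumpProcess γ F L s ω ∂μ = C) :
    ∃ c, Tendsto F (𝓝[<] b) (𝓝 c) := by
  have hL : IntegrableOn L {ω | γ ω < b} μ :=
    ((hint b le_rfl).integrableOn.congr_fun (fun ω hω => jumpProcess_of_le (le_of_lt hω))
      (measurableSet_lt hγ measurable_const))
  have hG : Tendsto (fun s : ℝ≥0 => μ.real {ω | (s : ℝ≥0∞) < γ ω}) (𝓝[<] b)
      (𝓝 (μ.real {ω | (b : ℝ≥0∞) ≤ γ ω})) := by
    convert (tendsto_setIntegral_le_nhdsLT (μ := μ) hγ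
      (integrable_const (1 : ℝ)).integrableOn).const_sub 1 using 2
    · rw [setIntegral_const, smul_eq_mul, mul_one,
        ← probReal_compl_eq_one_sub (measurableSet_le hγ measurable_const)]
      simp_rw [Set.compl_ofPred, not_le]
    · rw [setIntegral_const, smul_eq_mul, mul_one,
        ← probReal_compl_eq_one_sub (measurableSet_lt hγ measurable_const)]
      simp_rw [Set.compl_ofPred, not_lt]
  have hpos : 0 < μ.real {ω | (b : ℝ≥0∞) ≤ γ ω} := ENNReal.toReal_pos hb.ne' (measure_ne_top _ _)
  refine ⟨(C - ∫ ω in {ω | γ ω < b}, L ω ∂μ) / μ.real {ω | (b : ℝ≥0∞) ≤ γ ω},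
    ((tendsto_const_nhds.sub (tendsto_setIntegral_le_nhdsLT hγ hL)).div hG hpos.ne').congr' ?_⟩
  filter_upwards [self_mem_nhdsWithin] with s (hs : s < b)
  have hs_pos : 0 < μ.real {ω | (s : ℝ≥0∞) < γ ω} :=
    hpos.trans_le (measureReal_mono fun ω hω => (ENNReal.coe_lt_coe.2 hs).trans_le hω)
  rw [Pi.div_apply, ← hmean s hs, integral_jumpProcess hγ (hint s hs.le)]
  field_simp
  ring

lemma ae_cadlag_jumpProcess [IsProbabilityMeasure μ] (hγ : Measurable γ)
    (hFrc : ∀ t : ℝ≥0, (t : ℝ≥0∞) < tG μ γ → ContinuousWithinAt F (Ici t) t)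
    (hint : ∀ t ∈ TT μ γ, Integrable (jumpProcess γ F L t) μ)
    (hmean : ∀ t ∈ TT μ γ, ∫ ω, jumpProcess γ F L t ω ∂μ = ∫ ω, jumpProcess γ F L 0 ω ∂μ) :
    ∀ᵐ ω ∂μ, Cadlag fun t => jumpProcess γ F L t ω := by
  filter_upwards [ae_le_tG hγ, ae_forall_le_mem_TT hγ] with ω hω hTT
  refine cadlag_jumpProcess (fun t ht => hFrc t (ht.trans_le hω)) fun t _ ht => ?_
  exact exists_tendsto_nhdsLT_of_integral_eq hγ (hTT t ht)
    (fun s hs => hint s (mem_TT_of_le (hTT t ht) hs))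
    (fun s hs => hmean s (mem_TT_of_le (hTT t ht) hs.le))

lemma exists_seq_cutoffTime_tendsto_top [IsProbabilityMeasure μ] (hγ : Measurable γ) :
    ∃ ts : ℕ → ℝ≥0, Monotone ts ∧ (∀ n, ts n ∈ TT μ γ) ∧
      ∀ᵐ ω ∂μ, Tendsto (fun n => cutoffTime γ (ts n) ω) atTop (𝓝 ⊤) := by
  by_cases hB : CaseB μ γ
  · have hfin : tG μ γ ≠ ⊤ := fun h => by simp [CaseB, h] at hB
    refine ⟨fun _ => (tG μ γ).toNNReal, monotone_const, fun _ => hB.trans_le (measure_mono ?_), ?_⟩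
    · intro ω hω
      simp [ENNReal.coe_toNNReal hfin, hω.1]
    · filter_upwards [ae_le_tG hγ] with ω hω
      rw [cutoffTime_of_le (hω.trans_eq (ENNReal.coe_toNNReal hfin).symm)]
      exact tendsto_const_nhds
  · have hA : ∀ᵐ ω ∂μ, γ ω < tG μ γ ∨ tG μ γ = ⊤ := by
      filter_upwards [ae_le_tG hγ, measure_eq_zero_iff_ae_notMem.1 (nonpos_iff_eq_zero.1
        (not_lt.1 hB))] with ω h1 h2
      exact h1.lt_or_eq.imp_right fun h => not_lt_top_iff.1 fun ht => h2 ⟨h, ht⟩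
    have htG : 0 < tG μ γ := by
      obtain ⟨ω, hω⟩ := hA.exists
      exact hω.elim (fun h => zero_le.trans_lt h) fun h => h ▸ ENNReal.zero_lt_top
    obtain ⟨u, hu_mono, hu_mem, hu_lim⟩ := exists_seq_strictMono_tendsto' htG
    have hu : ∀ n, ((u n).toNNReal : ℝ≥0∞) = u n := fun n =>
      ENNReal.coe_toNNReal (hu_mem n).2.ne_top
    refine ⟨fun n => (u n).toNNReal, fun i j hij => ENNReal.toNNReal_mono (hu_mem j).2.ne_top
      (hu_mono.monotone hij), fun n => mem_TT_of_lt_tG ((hu n).trans_lt (hu_mem n).2), ?_⟩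
    filter_upwards [hA] with ω hω
    exact tendsto_cutoffTime_top (hu_lim.congr fun n => (hu n).symm) hω

lemma localMartingale_jumpProcess [IsProbabilityMeasure μ] (hγ : Measurable γ)
    (hFrc : ∀ t : ℝ≥0, (t : ℝ≥0∞) < tG μ γ → ContinuousWithinAt F (Ici t) t)
    (hL : Measurable L) (h : MartingaleOn μ γ (jumpProcess γ F L) (TT μ γ)) :
    LocalMartingale μ γ (jumpProcess γ F L) := by
  obtain ⟨ts, hmono, hTT, hlim⟩ := exists_seq_cutoffTime_tendsto_top (μ := μ) hγ
  obtain ⟨hint, hmean⟩ := h.integrable_and_integral_eq zero_mem_TT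
  refine ⟨adapted_jumpProcess hγ hL, ae_cadlag_jumpProcess hγ hFrc hint hmean,
    fun n => cutoffTime γ (ts n), fun n => isSJStoppingTime_cutoffTime hγ _, ?_, fun n => ?_⟩
  · filter_upwards [hlim] with ω hω using ⟨monotone_cutoffTime hmono ω, hω⟩
  · rw [constantAfter_jumpProcess.stopped_cutoffTime]
    exact h.uiMartingale_inf fun u hu => mem_TT_of_le (hTT n) hu

theorem stmt_6_general (μ : Measure Ω) [IsProbabilityMeasure μ] (γ : Ω → ℝ≥0∞)
    (hγ : Measurable γ)
    (F : ℝ≥0 → ℝ)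
    (hFrc : ∀ t : ℝ≥0, (t : ℝ≥0∞) < tG μ γ → ContinuousWithinAt F (Ici t) t)
    (L : Ω → ℝ) (hL : Measurable L)
    (M : ℝ≥0 → Ω → ℝ)
    (hM : M = fun (t : ℝ≥0) (ω : Ω) => if (t : ℝ≥0∞) < γ ω then F t else L ω) :
    (LocalMartingale μ γ M ↔ MartingaleOn μ γ M (TT μ γ)) ∧
    (MartingaleOn μ γ M (TT μ γ) ↔
      ((∀ t ∈ TT μ γ, Integrable (M t) μ) ∧
        ∀ t ∈ TT μ γ, ∫ ω, M t ω ∂μ = ∫ ω, M 0 ω ∂μ)) := by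
  obtain rfl : M = jumpProcess γ F L := hM
  have hadapt : ∀ t ∈ TT μ γ, Measurable[jumpσ m γ t] (jumpProcess γ F L t) :=
    fun t _ => adapted_jumpProcess hγ hL t
  refine ⟨⟨fun h => ?_, localMartingale_jumpProcess hγ hFrc hL⟩,
    fun h => h.integrable_and_integral_eq zero_mem_TT,
    fun h => constantAfter_jumpProcess.martingaleOn hγ hadapt h.1 h.2⟩
  obtain ⟨hint, hmean⟩ := h.integrable_and_integral_eq constantAfter_jumpProcess
  exact constantAfter_jumpProcess.martingaleOn hγ hadapt hint hmean

/-- **Theorem 2.** For `M_t = F(t)·1_{t<γ} + L·1_{t≥γ}` with `F` càdlàg on `[0, t_G)` and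
`L` a random variable, the following are equivalent: (i) `M` is a local martingale;
(ii) `(M_t)_{t ∈ 𝒯}` is a martingale; (iii) `E|M_t| < ∞` and `E(M_t) = E(M_0)` for all
`t ∈ 𝒯`. -/
theorem stmt_6 (μ : Measure Ω) [IsProbabilityMeasure μ] (γ : Ω → ℝ≥0∞)
    (hγ : Measurable γ) (hpos : 0 < μ {ω | 0 < γ ω})
    (F : ℝ≥0 → ℝ)
    (hFrc : ∀ t : ℝ≥0, (t : ℝ≥0∞) < tG μ γ → ContinuousWithinAt F (Ici t) t)
    (hFll : ∀ t : ℝ≥0, 0 < t → (t : ℝ≥0∞) < tG μ γ → ∃ c : ℝ, Tendsto F (𝓝[<] t) (𝓝 c))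
    (L : Ω → ℝ) (hL : Measurable L)
    (M : ℝ≥0 → Ω → ℝ)
    (hM : M = fun (t : ℝ≥0) (ω : Ω) => if (t : ℝ≥0∞) < γ ω then F t else L ω) :
    (LocalMartingale μ γ M ↔ MartingaleOn μ γ M (TT μ γ)) ∧
    (MartingaleOn μ γ M (TT μ γ) ↔
      ((∀ t ∈ TT μ γ, Integrable (M t) μ) ∧
        ∀ t ∈ TT μ γ, ∫ ω, M t ω ∂μ = ∫ ω, M 0 ω ∂μ)) :=
  stmt_6_general μ γ hγ F hFrc L hL M hM

end WithMeasurableSpace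

end SingleJump
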